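/- Let Φ be a positive semidefinite operator of trace 1 with eigenvalues λ_k (λ_0 the one whose eigenvector has the largest overlap with a fixed unit vector |φ⁺⟩), and suppose ⟨φ⁺|Φ|φ⁺⟩ ≥ 1 − r with 0 ≤ r < 1. Then λ_0 ≥ (1 − 2r)/(1 − r), and consequently λ_k ≤ r/(1 − r) for every k ≠ 0. -/

import Mathlib

open Matrix Finset
open scoped ComplexOrder

/-- In the eigendecomposition of a density matrix `Φ` with
`⟨φ⁺|Φ|φ⁺⟩ ≥ 1 - r` (0 ≤ r < 1), the eigenvalue `lam k₀` whose eigenvector has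
the largest overlap with the unit vector `φ⁺` satisfies `lam k₀ ≥ (1 - 2r)/(1 - r)`,
and consequently `lam k ≤ r/(1 - r)` for `k ≠ k₀`. -/
theorem stmt1 {N : ℕ} (Φ : Matrix (Fin N) (Fin N) ℂ) (hPSD : Φ.PosSemidef)
    (htr : Φ.trace = 1)
    (φ : Fin N → (Fin N → ℂ)) (lam : Fin N → ℝ)
    (horth : ∀ j k, dotProduct (star (φ j)) (φ k) = if j = k then 1 else 0)
    (heig : ∀ k, Φ.mulVec (φ k) = (lam k : ℂ) • φ k)
    (hΦ : Φ = ∑ k, (lam k : ℂ) • Matrix.vecMulVec (φ k) (star (φ k)))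
    (hlam : ∀ k, 0 ≤ lam k) (hlamsum : ∑ k, lam k = 1)
    (φp : Fin N → ℂ) (hφp : dotProduct (star φp) φp = 1)
    (r : ℝ) (hr0 : 0 ≤ r) (hr1 : r < 1)
    (hoverlap : 1 - r ≤ (dotProduct (star φp) (Φ.mulVec φp)).re)
    (k₀ : Fin N)
    (hmax : ∀ k, ‖dotProduct (star φp) (φ k)‖ ^ 2 ≤ ‖dotProduct (star φp) (φ k₀)‖ ^ 2) :
    (1 - 2 * r) / (1 - r) ≤ lam k₀ ∧ ∀ k, k ≠ k₀ → lam k ≤ r / (1 - r) := by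
  set c : Fin N → ℂ := fun k => dotProduct (star φp) (φ k) with hc
  set u : Fin N → ℝ := fun k => Complex.normSq (c k) with hu
  -- u is nonneg
  have hu0 : ∀ k, 0 ≤ u k := fun k => Complex.normSq_nonneg _
  -- sum of u is 1
  have husum : ∑ k, u k = 1 := by
    set A : Matrix (Fin N) (Fin N) ℂ := Matrix.of (fun k i => star (φ k i)) with hA
    have h1 : A * Aᴴ = 1 := by
      ext j k
      have := horth j k
      simp [Matrix.mul_apply, Matrix.conjTranspose_apply, dotProduct, hA,
        Matrix.one_apply] at this ⊢
      exact this
    have h2 : Aᴴ * A = 1 := mul_eq_one_comm.mp h1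
    have h3 : dotProduct (star (A.mulVec φp)) (A.mulVec φp) = 1 := by
      rw [Matrix.star_mulVec, Matrix.dotProduct_mulVec, Matrix.vecMul_vecMul, h2,
        Matrix.vecMul_one, hφp]
    have h4 : ∀ k, (A.mulVec φp) k = star (c k) := by
      intro k
      simp [Matrix.mulVec, dotProduct, hA, hc, mul_comm]
    have h5 : (↑(∑ k, u k) : ℂ) = 1 := by
      rw [← h3]
      push_cast
      rw [dotProduct]
      refine Finset.sum_congr rfl (fun k _ => ?_)
      rw [h4, Pi.star_apply, h4, star_star, hu]
      exact (Complex.mul_conj _).symm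
    exact_mod_cast h5
  -- overlap = ∑ lam k * u k
  have hvm : ∀ k, (Matrix.vecMulVec (φ k) (star (φ k))).mulVec φp
      = (dotProduct (star (φ k)) φp) • (φ k) := by
    intro k; ext i
    simp only [Matrix.vecMulVec_apply, Matrix.mulVec, dotProduct, Pi.smul_apply,
      smul_eq_mul, Finset.mul_sum, Finset.sum_mul]
    exact Finset.sum_congr rfl fun j _ => by ring
  have hconj : ∀ k, dotProduct (star (φ k)) φp = star (c k) := by
    intro k
    simp [dotProduct, hc, mul_comm]
  have hsplit : (∑ k, (lam k : ℂ) • Matrix.vecMulVec (φ k) (star (φ k))).mulVec φp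
      = ∑ k, (lam k : ℂ) • ((Matrix.vecMulVec (φ k) (star (φ k))).mulVec φp) := by
    ext i
    simp only [Matrix.mulVec, dotProduct, Finset.sum_apply, Matrix.sum_apply,
      Matrix.smul_apply, Pi.smul_apply, smul_eq_mul, Finset.sum_mul, Finset.mul_sum]
    rw [Finset.sum_comm]
    exact Finset.sum_congr rfl fun k _ => Finset.sum_congr rfl fun j _ => by ring
  have hov : (dotProduct (star φp) (Φ.mulVec φp)).re = ∑ k, lam k * u k := by
    have : dotProduct (star φp) (Φ.mulVec φp) = ∑ k, ((lam k * u k : ℝ) : ℂ) := by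
      rw [hΦ, hsplit]
      rw [show dotProduct (star φp) (∑ k, (lam k : ℂ) •
          ((Matrix.vecMulVec (φ k) (star (φ k))).mulVec φp))
        = ∑ k, dotProduct (star φp) ((lam k : ℂ) •
          ((Matrix.vecMulVec (φ k) (star (φ k))).mulVec φp)) by
        simp only [dotProduct, Finset.sum_apply, Finset.mul_sum]
        exact Finset.sum_comm]
      refine Finset.sum_congr rfl (fun k _ => ?_)
      rw [hvm, hconj, dotProduct_smul, dotProduct_smul, smul_eq_mul,
        smul_eq_mul]
      push_cast
      rw [show star φp ⬝ᵥ φ k = c k from rfl, mul_comm (star (c k)) (c k),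
        show (star (c k)) = (starRingEnd ℂ) (c k) from rfl, Complex.mul_conj]
    rw [this]
    rw [← Complex.ofReal_sum]
    exact Complex.ofReal_re _
  -- translate hmax
  have hmax' : ∀ k, u k ≤ u k₀ := by
    intro k
    have := hmax k
    simpa [hu, hc, Complex.normSq_eq_norm_sq] using this
  -- key inequalities
  have ht1 : u k₀ ≤ 1 := by
    rw [← husum]
    exact Finset.single_le_sum (fun k _ => hu0 k) (Finset.mem_univ k₀)
  have hA1 : 1 - r ≤ ∑ k, lam k * u k := hov ▸ hoverlap
  have hB : ∑ k, lam k * u k ≤ lam k₀ * u k₀ + (1 - lam k₀) * (1 - u k₀) := by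
    rw [← Finset.add_sum_erase _ _ (Finset.mem_univ k₀)]
    have h1 : ∑ k ∈ Finset.univ.erase k₀, lam k * u k
        ≤ ∑ k ∈ Finset.univ.erase k₀, lam k * (1 - u k₀) := by
      refine Finset.sum_le_sum (fun k hk => ?_)
      refine mul_le_mul_of_nonneg_left ?_ (hlam k)
      -- u k ≤ 1 - u k₀ for k ≠ k₀
      have hk' : k ≠ k₀ := (Finset.mem_erase.mp hk).1
      have : u k + u k₀ ≤ ∑ j, u j := by
        rw [← Finset.add_sum_erase _ _ (Finset.mem_univ k)]
        have : u k₀ ≤ ∑ j ∈ Finset.univ.erase k, u j :=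
          Finset.single_le_sum (fun j _ => hu0 j)
            (Finset.mem_erase.mpr ⟨Ne.symm hk', Finset.mem_univ _⟩)
        linarith
      rw [husum] at this
      linarith
    have h2 : ∑ k ∈ Finset.univ.erase k₀, lam k * (1 - u k₀)
        = (1 - lam k₀) * (1 - u k₀) := by
      rw [← Finset.sum_mul]
      congr 1
      have := Finset.add_sum_erase _ lam (Finset.mem_univ k₀)
      rw [hlamsum] at this
      linarith
    linarith
  have ht2 : 1 - r ≤ u k₀ := by
    have : ∑ k, lam k * u k ≤ ∑ k, lam k * u k₀ :=
      Finset.sum_le_sum fun k _ => mul_le_mul_of_nonneg_left (hmax' k) (hlam k)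
    rw [← Finset.sum_mul, hlamsum, one_mul] at this
    linarith
  have hl0 : 0 ≤ lam k₀ := hlam k₀
  have hl1 : lam k₀ ≤ 1 := by
    rw [← hlamsum]
    exact Finset.single_le_sum (fun k _ => hlam k) (Finset.mem_univ k₀)
  -- first goal
  have goal1 : (1 - 2 * r) / (1 - r) ≤ lam k₀ := by
    rw [div_le_iff₀ (by linarith : (0:ℝ) < 1 - r)]
    nlinarith [mul_nonneg hl0 (by linarith : (0:ℝ) ≤ u k₀ - (1 - r)),
      mul_nonneg (by linarith : (0:ℝ) ≤ 1 - lam k₀) (by linarith : (0:ℝ) ≤ u k₀ - (1 - r)),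
      mul_nonneg (by linarith : (0:ℝ) ≤ 1 - lam k₀) (by linarith : (0:ℝ) ≤ 1 - u k₀)]
  refine ⟨goal1, fun k hk => ?_⟩
  have hsum2 : lam k + lam k₀ ≤ 1 := by
    rw [← hlamsum, ← Finset.add_sum_erase _ _ (Finset.mem_univ k)]
    have : lam k₀ ≤ ∑ j ∈ Finset.univ.erase k, lam j :=
      Finset.single_le_sum (fun j _ => hlam j)
        (Finset.mem_erase.mpr ⟨Ne.symm hk, Finset.mem_univ _⟩)
    linarith
  rw [le_div_iff₀ (by linarith : (0:ℝ) < 1 - r)]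
  rw [div_le_iff₀ (by linarith : (0:ℝ) < 1 - r)] at goal1
  nlinarith
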